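/- Let φ be a feasible potential for (G, w), let the weight of edge (u,v) be decreased yielding w' with new potential weight w'_φ(u,v), and suppose w' has no negative cycle. Define φ'(x) = φ(x) + max{0, -w'_φ(u,v) - D(x)}, where D(x) is the shortest v-to-x path distance with respect to w_φ. Then φ' is a feasible potential for (G, w'). -/

import Mathlib

/-- Weight of a path given as a list of vertices: sum of weights of consecutive pairs. -/
def pathWeight {V : Type*} (w : V → V → ℝ) (l : List V) : ℝ :=
  ((l.zip l.tail).map fun p => w p.1 p.2).sum

/-- `l` is a directed path (walk) from `u` to `v` in the graph with edge relation `E`. -/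
def IsUVPath {V : Type*} (E : V → V → Prop) (u v : V) (l : List V) : Prop :=
  l ≠ [] ∧ l.Chain' E ∧ l.head? = some u ∧ l.getLast? = some v

/-- `l` is a directed cycle (closed walk): consecutive pairs are edges and it starts
and ends at the same vertex, traversing at least one edge. -/
def IsCycle {V : Type*} (E : V → V → Prop) (l : List V) : Prop :=
  2 ≤ l.length ∧ l.Chain' E ∧ l.head? = l.getLast?

/-- `w` is consistent with the graph `E`: no directed cycle has negative total weight. -/
def Consistent {V : Type*} (E : V → V → Prop) (w : V → V → ℝ) : Prop :=
  ∀ l, IsCycle E l → 0 ≤ pathWeight w l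

/-! Write `c = -w'_φ(u,v)` and `δ x = max 0 (c - D x)`, so that `φ' = φ + δ`. Closing a
`v`–`u` path with the edge `(u,v)` gives a cycle, whose `w'`-weight is nonnegative; as
`w' ≤ w` this yields `D u ≥ c`, hence `δ u = 0`, while `D v = 0` gives `δ v ≥ c`, which settles
the edge `(u,v)`. On every other edge `w' = w`, and the triangle inequality
`D b ≤ D a + w_φ(a,b)` makes `δ` drop by at most `w_φ(a,b)` along `(a,b)`. -/

def reducedWeight {V : Type*} (w : V → V → ℝ) (φ : V → ℝ) (a b : V) : ℝ :=
  w a b + φ b - φ a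

noncomputable def pathDist {V : Type*} (E : V → V → Prop) (w : V → V → ℝ) (s x : V) : EReal :=
  sInf {r : EReal | ∃ l, IsUVPath E s x l ∧ ((pathWeight w l : ℝ) : EReal) = r}

section PathWeight

variable {V : Type*} (w : V → V → ℝ)

@[simp]
lemma pathWeight_singleton (a : V) : pathWeight w [a] = 0 := rfl

@[simp]
lemma pathWeight_cons_cons (a b : V) (l : List V) :
    pathWeight w (a :: b :: l) = w a b + pathWeight w (b :: l) := by
  simp [pathWeight]

lemma pathWeight_concat_concat (l : List V) (a b : V) :
    pathWeight w (l ++ [a] ++ [b]) = pathWeight w (l ++ [a]) + w a b := by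
  induction l with
  | nil => simp
  | cons x l ih =>
    rcases l with _ | ⟨y, l⟩
    · simp
    · simp only [List.cons_append] at ih ⊢
      rw [pathWeight_cons_cons, pathWeight_cons_cons, ih, add_assoc]

lemma pathWeight_mono {w₁ w₂ : V → V → ℝ} (h : ∀ a b, w₁ a b ≤ w₂ a b) (l : List V) :
    pathWeight w₁ l ≤ pathWeight w₂ l := by
  induction l with
  | nil => rfl
  | cons a l ih =>
    rcases l with _ | ⟨b, l⟩
    · rfl
    · simp only [pathWeight_cons_cons] at ih ⊢
      exact add_le_add (h a b) ih

lemma pathWeight_nonneg {E : V → V → Prop} (hw : ∀ a b, E a b → 0 ≤ w a b) {l : List V}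
    (hl : l.IsChain E) : 0 ≤ pathWeight w l := by
  induction l with
  | nil => rfl
  | cons a l ih =>
    rcases l with _ | ⟨b, l⟩
    · rfl
    · rw [List.isChain_cons_cons] at hl
      rw [pathWeight_cons_cons]
      exact add_nonneg (hw a b hl.1) (ih hl.2)

lemma pathWeight_reducedWeight (φ : V → ℝ) {s t : V} {l : List V} (hs : l.head? = some s)
    (ht : l.getLast? = some t) :
    pathWeight (reducedWeight w φ) l = pathWeight w l + φ t - φ s := by
  induction l generalizing s with
  | nil => simp at hs
  | cons a l ih =>
    obtain rfl : a = s := by simpa using hs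
    rcases l with _ | ⟨b, l⟩
    · obtain rfl : a = t := by simpa using ht
      simp
    · rw [pathWeight_cons_cons, pathWeight_cons_cons, ih rfl (by simpa using ht),
        reducedWeight]
      ring

end PathWeight

section Paths

variable {V : Type*} {E : V → V → Prop}

lemma IsUVPath.concat {s a b : V} {l : List V} (hl : IsUVPath E s a l) (hab : E a b) :
    IsUVPath E s b (l ++ [b]) := by
  obtain ⟨hne, hchain, hs, ha⟩ := hl
  refine ⟨by simp, hchain.append (List.isChain_singleton b) ?_, ?_, by simp⟩
  · simp_all
  · rwa [List.head?_append_of_ne_nil _ hne]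

lemma IsUVPath.isCycle_concat {s a : V} {l : List V} (hl : IsUVPath E s a l) (has : E a s) :
    IsCycle E (l ++ [s]) := by
  obtain ⟨hne, hchain, hs, -⟩ := hl.concat has
  refine ⟨?_, hchain, by simp [hs]⟩
  have : l.length ≠ 0 := by simpa using hl.1
  rw [List.length_append, List.length_singleton]
  omega

end Paths

section PathDist

variable {V : Type*} {E : V → V → Prop} {w : V → V → ℝ} {s x : V}

lemma pathDist_le {l : List V} (hl : IsUVPath E s x l) : pathDist E w s x ≤ pathWeight w l :=
  sInf_le ⟨l, hl, rfl⟩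

lemma le_pathDist {r : EReal} (h : ∀ l, IsUVPath E s x l → r ≤ pathWeight w l) :
    r ≤ pathDist E w s x :=
  le_sInf fun _ ⟨l, hl, hr⟩ => hr ▸ h l hl

lemma pathDist_nonneg (hw : ∀ a b, E a b → 0 ≤ w a b) : 0 ≤ pathDist E w s x :=
  le_pathDist fun _ hl => EReal.coe_nonneg.mpr (pathWeight_nonneg w hw hl.2.1)

lemma pathDist_self (hw : ∀ a b, E a b → 0 ≤ w a b) : pathDist E w s s = 0 :=
  le_antisymm (pathDist_le (l := [s]) ⟨by simp, List.isChain_singleton s, rfl, rfl⟩)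
    (pathDist_nonneg hw)

lemma pathDist_le_add {a b : V} (hab : E a b) :
    pathDist E w s b ≤ pathDist E w s a + w a b := by
  rw [← EReal.sub_le_iff_le_add (.inl (EReal.coe_ne_bot _)) (.inl (EReal.coe_ne_top _))]
  refine le_pathDist fun l hl => EReal.sub_le_of_le_add ?_
  obtain ⟨l₀, rfl⟩ := List.getLast?_eq_some_iff.mp hl.2.2.2
  calc pathDist E w s b ≤ pathWeight w (l₀ ++ [a] ++ [b]) := pathDist_le (hl.concat hab)
    _ = _ := by rw [pathWeight_concat_concat, EReal.coe_add]

end PathDist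

lemma EReal.toReal_max_zero_coe (x : ℝ) : (max 0 (x : EReal)).toReal = max 0 x := by
  rw [← EReal.coe_zero, ← EReal.coe_strictMono.monotone.map_max, EReal.toReal_coe]

lemma EReal.toReal_max_zero_sub_le_add {c k : ℝ} {d e : EReal} (hk : 0 ≤ k) (he : e ≠ ⊥)
    (hed : e ≤ d + k) : (max 0 (c - d)).toReal ≤ k + (max 0 (c - e)).toReal := by
  induction d with
  | bot => simp_all
  | top => simpa using add_nonneg hk (EReal.toReal_nonneg (le_max_left 0 _))
  | coe d =>
    induction e with
    | bot => exact absurd rfl he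
    | top => exact absurd hed (by norm_cast)
    | coe e =>
      norm_cast at hed
      rw [← EReal.coe_sub, ← EReal.coe_sub, EReal.toReal_max_zero_coe, EReal.toReal_max_zero_coe]
      exact max_le (add_nonneg hk (le_max_left _ _)) (by linarith [le_max_right 0 (c - e)])

lemma EReal.toReal_max_zero_sub_of_le {c : ℝ} {d : EReal} (h : c ≤ d) :
    (max 0 (c - d)).toReal = 0 := by
  rw [max_eq_left (EReal.sub_nonpos.mpr h), EReal.toReal_zero]

lemma neg_reducedWeight_le_pathWeight {V : Type*} {E : V → V → Prop} {w w' : V → V → ℝ}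
    (φ : V → ℝ) (hcons : Consistent E w') (hle : ∀ a b, w' a b ≤ w a b) {u v : V}
    (huv : E u v) {l : List V} (hl : IsUVPath E v u l) :
    -reducedWeight w' φ u v ≤ pathWeight (reducedWeight w φ) l := by
  have hcycle := hcons _ (hl.isCycle_concat huv)
  obtain ⟨l₀, rfl⟩ := List.getLast?_eq_some_iff.mp hl.2.2.2
  have hred := pathWeight_reducedWeight w' φ (s := v) (t := v) (l := l₀ ++ [u] ++ [v])
    (by simpa [List.head?_append] using hl.2.2.1) (by simp)
  have hmono := pathWeight_mono (w₁ := reducedWeight w' φ) (w₂ := reducedWeight w φ)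
    (fun a b => by simp only [reducedWeight]; linarith [hle a b]) (l₀ ++ [u])
  rw [pathWeight_concat_concat] at hred
  linarith

theorem stmt6_general {V : Type*} (E : V → V → Prop) (w : V → V → ℝ) (φ : V → ℝ)
    (hfeas : ∀ a b, E a b → 0 ≤ w a b + φ b - φ a)
    (u v : V) (w' : V → V → ℝ)
    (hdec : w' u v ≤ w u v)
    (hw' : ∀ a b, ¬(a = u ∧ b = v) → w' a b = w a b)
    (hnoneg : Consistent E w')
    (D : V → EReal)
    (hD : ∀ x, D x = sInf {r : EReal | ∃ l, IsUVPath E v x l ∧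
      ((pathWeight (fun a b => w a b + φ b - φ a) l : ℝ) : EReal) = r})
    (φ' : V → ℝ)
    (hφ' : ∀ x, φ' x = φ x +
      (max 0 (((-(w' u v + φ v - φ u) : ℝ) : EReal) - D x)).toReal) :
    ∀ a b, E a b → 0 ≤ w' a b + φ' b - φ' a := by
  obtain rfl : D = pathDist E (reducedWeight w φ) v := funext hD
  have hnn : ∀ a b, E a b → 0 ≤ reducedWeight w φ a b := hfeas
  have hle (a b : V) : w' a b ≤ w a b := by
    by_cases h : a = u ∧ b = v
    · obtain ⟨rfl, rfl⟩ := h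
      exact hdec
    · exact (hw' a b h).le
  intro a b hab
  by_cases huv : a = u ∧ b = v
  · obtain ⟨rfl, rfl⟩ := huv
    have hDa : ((-(w' a b + φ b - φ a) : ℝ) : EReal) ≤ pathDist E (reducedWeight w φ) b a :=
      le_pathDist fun l hl =>
        EReal.coe_le_coe_iff.mpr (neg_reducedWeight_le_pathWeight φ hnoneg hle hab hl)
    rw [hφ', hφ', pathDist_self hnn, EReal.toReal_max_zero_sub_of_le hDa, sub_zero,
      EReal.toReal_max_zero_coe]
    linarith [le_max_right 0 (-(w' a b + φ b - φ a))]
  · have hδ := EReal.toReal_max_zero_sub_le_add (c := -(w' u v + φ v - φ u)) (hfeas a b hab)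
      (ne_bot_of_le_ne_bot EReal.zero_ne_bot (pathDist_nonneg hnn)) (pathDist_le_add (s := v) hab)
    rw [hφ', hφ', hw' a b huv]
    linarith

/-- Potential update after a weight decrease on edge `(u,v)` (forward version):
`φ'(x) = φ(x) + max{0, -w'_φ(u,v) - D(x)}` is feasible for `(G, w')`, where `D(x)`
is the shortest `v`-to-`x` distance w.r.t. `w_φ` (`+∞` if unreachable). -/
theorem stmt6 {V : Type*} (E : V → V → Prop) (w : V → V → ℝ) (φ : V → ℝ)
    (hfeas : ∀ a b, E a b → 0 ≤ w a b + φ b - φ a)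
    (u v : V) (he : E u v) (w' : V → V → ℝ)
    (hdec : w' u v ≤ w u v)
    (hw' : ∀ a b, ¬(a = u ∧ b = v) → w' a b = w a b)
    (hnoneg : Consistent E w')
    (D : V → EReal)
    (hD : ∀ x, D x = sInf {r : EReal | ∃ l, IsUVPath E v x l ∧
      ((pathWeight (fun a b => w a b + φ b - φ a) l : ℝ) : EReal) = r})
    (φ' : V → ℝ)
    (hφ' : ∀ x, φ' x = φ x +
      (max 0 (((-(w' u v + φ v - φ u) : ℝ) : EReal) - D x)).toReal) :
    ∀ a b, E a b → 0 ≤ w' a b + φ' b - φ' a :=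
  stmt6_general E w φ hfeas u v w' hdec hw' hnoneg D hD φ' hφ'
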